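/- arXiv:2401.06434 — 2 statements merged into one kernel-verified Lean document; each statement's English description precedes it below -/
import Mathlib

section
/- Let Φ be an Orlicz function with p⁺ = sup_{t>0} tφ(t)/Φ(t), and let Λ > 1. Then there exists a constant C = C(Φ, Λ) > 0 such that for all a, b ∈ [0,∞) and all λ ∈ (1, Λ]: Φ(a+b) ≤ λ·Φ(a) + C/(λ−1)^{p⁺−1} · Φ(b). -/
open Set Filter MeasureTheory

/-- An Orlicz function `Φ` together with its right derivative `φ`:
`Φ` is continuous, convex on `[0,∞)`, vanishes at `0`, satisfies
`Φ(t)/t → 0` as `t → 0⁺`, `Φ(t)/t → ∞` as `t → ∞`, the Δ₂-condition,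
and has the representation `Φ(t) = ∫₀ᵗ φ(s) ds` with `φ` non-decreasing,
right-continuous, `φ(0) = 0`, `φ(t) > 0` for `t > 0`, `φ(t) → ∞`. -/
structure IsOrliczPair (Φ φ : ℝ → ℝ) : Prop where
  continuousOn : ContinuousOn Φ (Ici 0)
  convexOn : ConvexOn ℝ (Ici 0) Φ
  map_zero : Φ 0 = 0
  tendsto_zero : Tendsto (fun t => Φ t / t) (nhdsWithin 0 (Ioi 0)) (nhds 0)
  tendsto_atTop : Tendsto (fun t => Φ t / t) atTop atTop
  delta2 : ∃ C > 0, ∀ t ≥ 0, Φ (2 * t) ≤ C * Φ t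
  rep : ∀ t ≥ 0, Φ t = ∫ s in (0:ℝ)..t, φ s
  deriv_mono : MonotoneOn φ (Ici 0)
  deriv_rightCont : ∀ t ≥ 0, ContinuousWithinAt φ (Ici t) t
  deriv_zero : φ 0 = 0
  deriv_pos : ∀ t > 0, 0 < φ t
  deriv_atTop : Tendsto φ atTop atTop

/-- The set of values `t·φ(t)/Φ(t)` for `t > 0`, whose infimum and supremum
are `p⁻_Φ` and `p⁺_Φ`. -/
def orliczRatioSet (Φ φ : ℝ → ℝ) : Set ℝ := {r : ℝ | ∃ t > 0, r = t * φ t / Φ t}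

/-!
Along the exponential curve `x ↦ t eˣ`, the bound `u φ(u) ≤ p⁺ Φ(u)` is the differential inequality
`f' ≤ p⁺ f` for `f x = Φ(t eˣ)`, so Grönwall gives `Φ(s t) ≤ s^{p⁺} Φ(t)` for `s ≥ 1`.  Writing
`a + b = θ (a/θ) + (1-θ) (b/(1-θ))`, convexity and this growth bound give
`Φ(a+b) ≤ θ^{1-p⁺} Φ(a) + (1-θ)^{1-p⁺} Φ(b)`.  The choice `θ = λ^{-1/p⁺}` makes the first
coefficient at most `λ`, and Bernoulli's inequality gives `1 - θ ≥ (λ-1)/(p⁺ λ)`.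
-/

theorem map_mul_le_rpow_mul_of_mul_deriv_le {Φ φ : ℝ → ℝ} {p t s : ℝ} (hc : ContinuousOn Φ (Ioi 0))
    (hd : ∀ u > 0, HasDerivWithinAt Φ (φ u) (Ici u) u) (hp : ∀ u > 0, u * φ u ≤ p * Φ u)
    (ht : 0 < t) (hs : 1 ≤ s) : Φ (s * t) ≤ s ^ p * Φ t := by
  have hpos : ∀ x, 0 < t * Real.exp x := fun x => mul_pos ht (Real.exp_pos x)
  have hcont : ContinuousOn (fun x => Φ (t * Real.exp x)) (Icc 0 (Real.log s)) :=
    hc.comp (by fun_prop) fun x _ => hpos x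
  have hderiv : ∀ x, HasDerivWithinAt (fun x => Φ (t * Real.exp x))
      (t * Real.exp x * φ (t * Real.exp x)) (Ici x) x := by
    intro x
    have hmaps : MapsTo (fun x => t * Real.exp x) (Ici x) (Ici (t * Real.exp x)) :=
      fun y hy => mul_le_mul_of_nonneg_left (Real.exp_le_exp.2 hy) ht.le
    simpa [Function.comp_def, mul_comm] using
      (hd _ (hpos x)).comp x ((Real.hasDerivAt_exp x).const_mul t).hasDerivWithinAt hmaps
  have := le_gronwallBound_of_liminf_deriv_right_le (δ := Φ t) (K := p) (ε := 0) hcont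
    (fun x _ _ hr => (hderiv x).liminf_right_slope_le hr) (by simp)
    (fun x _ => (add_zero (p * _)).symm ▸ hp _ (hpos x)) (Real.log s)
    (right_mem_Icc.2 (Real.log_nonneg hs))
  rwa [gronwallBound_ε0, sub_zero, Real.exp_log (by linarith), mul_comm t, mul_comm p,
    ← Real.rpow_def_of_pos (by linarith), mul_comm (Φ t)] at this

theorem ConvexOn.map_add_le_of_rpow_growth {Φ : ℝ → ℝ} {p θ a b : ℝ}
    (hconv : ConvexOn ℝ (Ici 0) Φ) (hgrowth : ∀ s ≥ 1, ∀ t ≥ 0, Φ (s * t) ≤ s ^ p * Φ t)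
    (hθ₀ : 0 < θ) (hθ₁ : θ < 1) (ha : 0 ≤ a) (hb : 0 ≤ b) :
    Φ (a + b) ≤ θ⁻¹ ^ (p - 1) * Φ a + (1 - θ)⁻¹ ^ (p - 1) * Φ b := by
  have hscale : ∀ d x, 0 < d → d ≤ 1 → 0 ≤ x → d * Φ (d⁻¹ * x) ≤ d⁻¹ ^ (p - 1) * Φ x := by
    intro d x hd₀ hd₁ hx
    calc d * Φ (d⁻¹ * x) ≤ d * (d⁻¹ ^ p * Φ x) :=
          mul_le_mul_of_nonneg_left (hgrowth _ (one_le_inv₀ hd₀ |>.2 hd₁) x hx) hd₀.le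
      _ = d⁻¹ ^ (p - 1) * Φ x := by
          rw [Real.rpow_sub_one (inv_ne_zero hd₀.ne'), div_inv_eq_mul]; ring
  have hsplit : a + b = θ • (θ⁻¹ * a) + (1 - θ) • ((1 - θ)⁻¹ * b) := by
    simp only [smul_eq_mul]
    field_simp [sub_ne_zero.2 hθ₁.ne']
  calc Φ (a + b) ≤ θ * Φ (θ⁻¹ * a) + (1 - θ) * Φ ((1 - θ)⁻¹ * b) := by
        rw [hsplit]
        exact hconv.2 (mem_Ici.2 (by positivity))
          (mem_Ici.2 (mul_nonneg (inv_nonneg.2 (by linarith)) hb)) hθ₀.le (by linarith) (by ring)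
    _ ≤ θ⁻¹ ^ (p - 1) * Φ a + (1 - θ)⁻¹ ^ (p - 1) * Φ b :=
        add_le_add (hscale θ a hθ₀ hθ₁.le ha) (hscale (1 - θ) b (by linarith) (by linarith) hb)

theorem div_le_one_sub_inv_rpow_inv {lam p : ℝ} (hlam : 1 < lam) (hp : 1 ≤ p) :
    (lam - 1) / (p * lam) ≤ 1 - (lam ^ p⁻¹)⁻¹ := by
  have hlam₀ : 0 < lam := by linarith
  have hbernoulli : (1 + (lam⁻¹ - 1)) ^ p⁻¹ ≤ 1 + p⁻¹ * (lam⁻¹ - 1) :=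
    rpow_one_add_le_one_add_mul_self (by linarith [inv_pos.2 hlam₀]) (by positivity)
      (inv_le_one_of_one_le₀ hp)
  rw [add_sub_cancel, Real.inv_rpow hlam₀.le] at hbernoulli
  have hid : (lam - 1) / (p * lam) = -(p⁻¹ * (lam⁻¹ - 1)) := by
    field_simp; ring
  linarith

namespace IsOrliczPair

variable {Φ φ : ℝ → ℝ} (h : IsOrliczPair Φ φ)
include h

theorem intervalIntegrable_deriv {t : ℝ} (ht : 0 ≤ t) : IntervalIntegrable φ volume 0 t :=
  (h.deriv_mono.mono fun x hx => by rw [uIcc_of_le ht] at hx; exact hx.1).intervalIntegrable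

theorem pos {t : ℝ} (ht : 0 < t) : 0 < Φ t := by
  rw [h.rep t ht.le]
  exact intervalIntegral.intervalIntegral_pos_of_pos_on (h.intervalIntegrable_deriv ht.le)
    (fun x hx => h.deriv_pos x hx.1) ht

theorem nonneg {t : ℝ} (ht : 0 ≤ t) : 0 ≤ Φ t := by
  rcases ht.eq_or_lt with rfl | ht
  · exact h.map_zero.ge
  · exact (h.pos ht).le

theorem le_mul_deriv {t : ℝ} (ht : 0 ≤ t) : Φ t ≤ t * φ t := by
  rw [h.rep t ht]
  simpa using intervalIntegral.integral_mono_on ht (h.intervalIntegrable_deriv ht)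
    intervalIntegrable_const fun x hx => h.deriv_mono hx.1 (le_trans hx.1 hx.2) hx.2

theorem hasDerivWithinAt {u : ℝ} (hu : 0 ≤ u) : HasDerivWithinAt Φ (φ u) (Ici u) u := by
  have hmeas : StronglyMeasurableAtFilter φ (nhdsWithin u (Ioi u)) volume :=
    ⟨Icc u (u + 1), Icc_mem_nhdsGT (lt_add_one u),
      ((h.deriv_mono.mono fun x hx => le_trans hu hx.1).integrableOn_isCompact
        isCompact_Icc).aestronglyMeasurable⟩
  exact (intervalIntegral.integral_hasDerivWithinAt_right (h.intervalIntegrable_deriv hu) hmeas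
    ((h.deriv_rightCont u hu).mono Ioi_subset_Ici_self)).congr
    (fun y hy => h.rep y (le_trans hu hy)) (h.rep u hu)

variable {pp : ℝ} (hpp : IsLUB (orliczRatioSet Φ φ) pp)
include hpp

theorem mul_deriv_le {t : ℝ} (ht : 0 < t) : t * φ t ≤ pp * Φ t :=
  (div_le_iff₀ (h.pos ht)).1 (hpp.1 ⟨t, ht, rfl⟩)

theorem one_le_of_isLUB : 1 ≤ pp := by
  have hratio : (1 : ℝ) ≤ 1 * φ 1 / Φ 1 :=
    (le_div_iff₀ (h.pos one_pos)).2 (by simpa using h.le_mul_deriv zero_le_one)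
  exact hratio.trans (hpp.1 ⟨1, one_pos, rfl⟩)

theorem map_mul_le_rpow_mul {s t : ℝ} (hs : 1 ≤ s) (ht : 0 ≤ t) : Φ (s * t) ≤ s ^ pp * Φ t := by
  rcases ht.eq_or_lt with rfl | ht
  · simp [h.map_zero]
  · exact map_mul_le_rpow_mul_of_mul_deriv_le (h.continuousOn.mono Ioi_subset_Ici_self)
      (fun u hu => h.hasDerivWithinAt hu.le) (fun u hu => h.mul_deriv_le hpp hu) ht hs

end IsOrliczPair

theorem orlicz_splitting_lemma (Φ φ : ℝ → ℝ) (h : IsOrliczPair Φ φ)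
    (pp : ℝ) (hpp : IsLUB (orliczRatioSet Φ φ) pp)
    (Λ : ℝ) (hΛ : 1 < Λ) :
    ∃ C > 0, ∀ a b : ℝ, 0 ≤ a → 0 ≤ b → ∀ lam ∈ Ioc (1:ℝ) Λ,
      Φ (a + b) ≤ lam * Φ a + C / (lam - 1) ^ (pp - 1) * Φ b := by
  have hp₁ := h.one_le_of_isLUB hpp
  refine ⟨(pp * Λ) ^ (pp - 1), by positivity, ?_⟩
  rintro a b ha hb lam ⟨hlam₁, hlamΛ⟩
  set μ := lam ^ pp⁻¹
  have hμ : 1 < μ := Real.one_lt_rpow hlam₁ (by positivity)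
  have hsplit := h.convexOn.map_add_le_of_rpow_growth
    (fun s hs t ht => h.map_mul_le_rpow_mul hpp hs ht) (inv_pos.2 (by linarith))
    (inv_lt_one_of_one_lt₀ hμ) ha hb
  rw [inv_inv] at hsplit
  have hfirst : μ ^ (pp - 1) ≤ lam := by
    calc μ ^ (pp - 1) ≤ μ ^ pp := Real.rpow_le_rpow_of_exponent_le hμ.le (by linarith)
      _ = lam := by
        rw [← Real.rpow_mul (by linarith), inv_mul_cancel₀ (by positivity), Real.rpow_one]
  have hgap : (lam - 1) / (pp * Λ) ≤ 1 - μ⁻¹ :=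
    (div_le_div_of_nonneg_left (by linarith) (by positivity) (by gcongr)).trans
      (div_le_one_sub_inv_rpow_inv hlam₁ hp₁)
  have hsecond : (1 - μ⁻¹)⁻¹ ^ (pp - 1) ≤ (pp * Λ) ^ (pp - 1) / (lam - 1) ^ (pp - 1) := by
    rw [← Real.div_rpow (by positivity) (by linarith)]
    exact Real.rpow_le_rpow (inv_nonneg.2 (sub_nonneg.2 (inv_le_one_of_one_le₀ hμ.le)))
      (inv_le_of_inv_le₀ (by positivity) (by rwa [inv_div])) (by linarith)
  calc Φ (a + b) ≤ μ ^ (pp - 1) * Φ a + (1 - μ⁻¹)⁻¹ ^ (pp - 1) * Φ b := hsplit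
    _ ≤ lam * Φ a + (pp * Λ) ^ (pp - 1) / (lam - 1) ^ (pp - 1) * Φ b := by
      gcongr
      exacts [h.nonneg ha, h.nonneg hb]
end

section
/- Fractional Orlicz–Poincaré–Wirtinger inequality with scaling: let Ω ⊂ ℝ^N (N ≥ 1) be a bounded open set, s ∈ (0,1), λ > 0, and Ω_λ = {λx : x ∈ Ω}. For any Orlicz function Φ there exists a constant C = C(s, N, Ω, Φ) > 0, independent of λ, such that for every u in the fractional Orlicz–Sobolev space W^{s,Φ}(Ω_λ): ∫_{Ω_λ} Φ(|u(x) − (u)_{Ω_λ}|) dx ≤ C ∫_{Ω_λ}∫_{Ω_λ} Φ(λ^s |u(x)−u(y)|/|x−y|^s) dx dy / |x−y|^N, where (u)_{Ω_λ} denotes the average of u over Ω_λ. -/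
open Set Filter MeasureTheory Pointwise

/-! Jensen's inequality for the convex function `t ↦ Φ |u x - t|` bounds `Φ |u x - (u)_S|` by the
mean of `Φ |u x - u y|` over `y ∈ S`. On `S = λ • Ω` all distances are at most `λ D` with
`D = diam Ω + 1`, so `|u x - u y| ≤ D ^ s · λ ^ s |D_s u(x, y)|`; the Δ₂-condition absorbs the fixed
factor `D ^ s`, and `1 ≤ (λ D) ^ N / |x - y| ^ N` produces the kernel. The factor `λ ^ N` of this
bound cancels against `|λ • Ω| = λ ^ N |Ω|` in the mean. -/

structure IsOrlicz (Φ : ℝ → ℝ) : Prop where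
  continuousOn : ContinuousOn Φ (Ici 0)
  convexOn : ConvexOn ℝ (Ici 0) Φ
  map_zero : Φ 0 = 0
  tendsto_zero : Tendsto (fun t => Φ t / t) (nhdsWithin 0 (Ioi 0)) (nhds 0)
  tendsto_atTop : Tendsto (fun t => Φ t / t) atTop atTop
  delta2 : ∃ C > 0, ∀ t ≥ 0, Φ (2 * t) ≤ C * Φ t

namespace IsOrlicz

variable {Φ : ℝ → ℝ}

lemma map_le_div_mul (hΦ : IsOrlicz Φ) {a b : ℝ} (ha : 0 ≤ a) (hab : a ≤ b) (hb : 0 < b) :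
    Φ a ≤ a / b * Φ b := by
  have h := hΦ.convexOn.2 (self_mem_Ici (a := (0 : ℝ))) (mem_Ici.2 hb.le)
    (sub_nonneg.2 ((div_le_one hb).2 hab)) (div_nonneg ha hb.le) (sub_add_cancel 1 (a / b))
  simp only [smul_eq_mul, mul_zero, zero_add, hΦ.map_zero, div_mul_cancel₀ _ hb.ne'] at h
  linarith

lemma nonneg (hΦ : IsOrlicz Φ) {t : ℝ} (ht : 0 ≤ t) : 0 ≤ Φ t := by
  obtain rfl | ht := ht.eq_or_lt
  · exact hΦ.map_zero.ge
  -- the slope `Φ ε / ε` tends to `0` and never exceeds `Φ t / t` for `ε ≤ t`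
  have hslope : 0 ≤ Φ t / t := by
    refine le_of_tendsto hΦ.tendsto_zero ?_
    filter_upwards [Ioo_mem_nhdsGT ht] with ε hε
    rw [div_le_div_iff₀ hε.1 ht]
    calc Φ ε * t ≤ ε / t * Φ t * t := by gcongr; exact hΦ.map_le_div_mul hε.1.le hε.2.le ht
      _ = Φ t * ε := by field_simp
  simpa [div_mul_cancel₀ _ ht.ne'] using mul_nonneg hslope ht.le

lemma mono (hΦ : IsOrlicz Φ) {a b : ℝ} (ha : 0 ≤ a) (hab : a ≤ b) : Φ a ≤ Φ b := by
  obtain rfl | hb := (ha.trans hab).eq_or_lt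
  · rw [le_antisymm hab ha]
  calc Φ a ≤ a / b * Φ b := hΦ.map_le_div_mul ha hab hb
    _ ≤ Φ b := mul_le_of_le_one_left (hΦ.nonneg hb.le) ((div_le_one hb).2 hab)

lemma exists_map_mul_le (hΦ : IsOrlicz Φ) {A : ℝ} (hA : 0 ≤ A) :
    ∃ K > 0, ∀ t ≥ 0, Φ (A * t) ≤ K * Φ t := by
  obtain ⟨c, hc, hΔ₂⟩ := hΦ.delta2
  obtain ⟨n, hn⟩ := pow_unbounded_of_one_lt A one_lt_two
  have iterate : ∀ m : ℕ, ∀ t ≥ 0, Φ (2 ^ m * t) ≤ c ^ m * Φ t := by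
    intro m
    induction m with
    | zero => simp
    | succ m ih =>
      intro t ht
      calc Φ (2 ^ (m + 1) * t) = Φ (2 * (2 ^ m * t)) := by ring_nf
        _ ≤ c * Φ (2 ^ m * t) := hΔ₂ _ (by positivity)
        _ ≤ c * (c ^ m * Φ t) := mul_le_mul_of_nonneg_left (ih t ht) hc.le
        _ = c ^ (m + 1) * Φ t := by ring
  refine ⟨c ^ n, pow_pos hc n, fun t ht => ?_⟩
  exact (hΦ.mono (mul_nonneg hA ht) (mul_le_mul_of_nonneg_right hn.le ht)).trans (iterate n t ht)

lemma continuous_comp_abs (hΦ : IsOrlicz Φ) : Continuous fun t => Φ |t| :=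
  continuousOn_univ.1 <| hΦ.continuousOn.comp continuous_abs.continuousOn fun t _ => abs_nonneg t

lemma convexOn_comp_abs_sub (hΦ : IsOrlicz Φ) (c : ℝ) : ConvexOn ℝ univ fun t => Φ |c - t| := by
  refine ⟨convex_univ, fun x _ y _ a b ha hb hab => ?_⟩
  have htri : |c - (a • x + b • y)| ≤ a • |c - x| + b • |c - y| := by
    calc |c - (a • x + b • y)| = |a * (c - x) + b * (c - y)| := by
          congr 1; simp only [smul_eq_mul]; linear_combination (-c) * hab
      _ ≤ |a * (c - x)| + |b * (c - y)| := abs_add_le _ _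
      _ = a • |c - x| + b • |c - y| := by
          rw [abs_mul, abs_mul, abs_of_nonneg ha, abs_of_nonneg hb, smul_eq_mul, smul_eq_mul]
  exact (hΦ.mono (abs_nonneg _) htri).trans
    (hΦ.convexOn.2 (abs_nonneg (c - x)) (abs_nonneg (c - y)) ha hb hab)

section Jensen

variable {α : Type*} [MeasurableSpace α] {μ : Measure α} {u : α → ℝ}

lemma map_abs_sub_average_le (hΦ : IsOrlicz Φ) [IsFiniteMeasure μ] [NeZero μ]
    (hu : Integrable u μ) (c : ℝ) :
    ENNReal.ofReal (Φ |c - ⨍ y, u y ∂μ|) ≤ ⨍⁻ y, ENNReal.ofReal (Φ |c - u y|) ∂μ := by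
  have hnonneg : 0 ≤ᵐ[μ] fun y => Φ |c - u y| := ae_of_all _ fun y => hΦ.nonneg (abs_nonneg _)
  by_cases hint : Integrable (fun y => Φ |c - u y|) μ
  · have hJensen := (hΦ.convexOn_comp_abs_sub c).map_average_le
      (hΦ.continuous_comp_abs.comp (continuous_sub_left c)).continuousOn isClosed_univ
      (ae_of_all _ fun _ => mem_univ _) hu hint
    rw [laverage_eq, ← ofReal_average hint hnonneg]
    exact ENNReal.ofReal_le_ofReal hJensen
  · have htop : ∫⁻ y, ENNReal.ofReal (Φ |c - u y|) ∂μ = ⊤ := by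
      by_contra hfin
      exact hint ⟨(hΦ.continuous_comp_abs.comp_aestronglyMeasurable
          (aestronglyMeasurable_const.sub hu.1)),
        (hasFiniteIntegral_iff_ofReal hnonneg).2 (lt_top_iff_ne_top.2 hfin)⟩
    rw [laverage_eq, htop, ENNReal.top_div_of_ne_top (measure_ne_top _ _)]
    exact le_top

lemma lintegral_map_abs_sub_average_le (hΦ : IsOrlicz Φ) [IsFiniteMeasure μ]
    (hu : Integrable u μ) :
    ∫⁻ x, ENNReal.ofReal (Φ |u x - ⨍ y, u y ∂μ|) ∂μ ≤
      (μ univ)⁻¹ * ∫⁻ x, ∫⁻ y, ENNReal.ofReal (Φ |u x - u y|) ∂μ ∂μ := by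
  obtain rfl | hμ := eq_zero_or_neZero μ
  · simp
  calc ∫⁻ x, ENNReal.ofReal (Φ |u x - ⨍ y, u y ∂μ|) ∂μ
      ≤ ∫⁻ x, ⨍⁻ y, ENNReal.ofReal (Φ |u x - u y|) ∂μ ∂μ :=
        lintegral_mono fun x => hΦ.map_abs_sub_average_le hu (u x)
    _ = _ := by
      simp_rw [laverage_eq, ENNReal.div_eq_inv_mul]
      exact lintegral_const_mul' _ _ (ENNReal.inv_ne_top.2 (Measure.measure_univ_ne_zero.2 hμ.out))

end Jensen

section Kernel

variable {E : Type*} [NormedAddCommGroup E] {s l D K : ℝ}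

lemma map_abs_le_mul_map_holderQuotient (hΦ : IsOrlicz Φ) (hs : 0 ≤ s) (hl : 0 < l)
    (hK : ∀ t ≥ 0, Φ (D ^ s * t) ≤ K * Φ t) (a : ℝ) {r : ℝ} (hr : 0 < r) (hrD : r ≤ l * D) :
    Φ |a| ≤ K * Φ (l ^ s * (|a| / r ^ s)) := by
  have hD : 0 ≤ D := nonneg_of_mul_nonneg_right (hr.le.trans hrD) hl
  have hq : 0 ≤ |a| / r ^ s := by positivity
  have hbound : |a| ≤ D ^ s * (l ^ s * (|a| / r ^ s)) := by
    calc |a| = |a| / r ^ s * r ^ s := (div_mul_cancel₀ _ (by positivity)).symm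
      _ ≤ |a| / r ^ s * (l * D) ^ s := by gcongr
      _ = D ^ s * (l ^ s * (|a| / r ^ s)) := by rw [Real.mul_rpow hl.le hD]; ring
  exact (hΦ.mono (abs_nonneg a) hbound).trans (hK _ (by positivity))

lemma map_abs_sub_le_mul_kernel (hΦ : IsOrlicz Φ) {p : ℝ} (hp : 0 ≤ p) (hs : 0 ≤ s) (hl : 0 < l)
    (hK0 : 0 ≤ K) (hK : ∀ t ≥ 0, Φ (D ^ s * t) ≤ K * Φ t) (u : E → ℝ) {x y : E}
    (hxy : ‖x - y‖ ≤ l * D) :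
    Φ |u x - u y| ≤
      K * (l * D) ^ p * (Φ (l ^ s * (|u x - u y| / ‖x - y‖ ^ s)) / ‖x - y‖ ^ p) := by
  have hkernel : 0 ≤ Φ (l ^ s * (|u x - u y| / ‖x - y‖ ^ s)) := hΦ.nonneg (by positivity)
  obtain rfl | hne := eq_or_ne x y
  · have hzero : Φ |u x - u x| = 0 := by rw [sub_self, abs_zero, hΦ.map_zero]
    have hlD : 0 ≤ (l * D) ^ p := Real.rpow_nonneg ((norm_nonneg _).trans hxy) p
    rw [hzero]
    exact mul_nonneg (mul_nonneg hK0 hlD) (div_nonneg hkernel (by positivity))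
  have hr : 0 < ‖x - y‖ := norm_sub_pos_iff.2 hne
  calc Φ |u x - u y| ≤ K * Φ (l ^ s * (|u x - u y| / ‖x - y‖ ^ s)) :=
        hΦ.map_abs_le_mul_map_holderQuotient hs hl hK _ hr hxy
    _ = K * ‖x - y‖ ^ p * (Φ (l ^ s * (|u x - u y| / ‖x - y‖ ^ s)) / ‖x - y‖ ^ p) := by
        field_simp
    _ ≤ K * (l * D) ^ p * (Φ (l ^ s * (|u x - u y| / ‖x - y‖ ^ s)) / ‖x - y‖ ^ p) := by
        gcongr

lemma lintegral_lintegral_map_abs_sub_le [MeasurableSpace E] (hΦ : IsOrlicz Φ) (μ : Measure E)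
    {p : ℝ} (hp : 0 ≤ p) (hs : 0 ≤ s) (hl : 0 < l) (hK0 : 0 ≤ K)
    (hK : ∀ t ≥ 0, Φ (D ^ s * t) ≤ K * Φ t) (u : E → ℝ) {S : Set E} (hS : MeasurableSet S)
    (hdiam : ∀ x ∈ S, ∀ y ∈ S, ‖x - y‖ ≤ l * D) :
    ∫⁻ x in S, ∫⁻ y in S, ENNReal.ofReal (Φ |u x - u y|) ∂μ ∂μ ≤
      ENNReal.ofReal (K * (l * D) ^ p) * ∫⁻ x in S, ∫⁻ y in S,
        ENNReal.ofReal (Φ (l ^ s * (|u x - u y| / ‖x - y‖ ^ s)) / ‖x - y‖ ^ p) ∂μ ∂μ := by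
  rw [← lintegral_const_mul' _ _ ENNReal.ofReal_ne_top]
  refine lintegral_mono_ae ?_
  filter_upwards [ae_restrict_mem hS] with x hx
  rw [← lintegral_const_mul' _ _ ENNReal.ofReal_ne_top]
  refine lintegral_mono_ae ?_
  filter_upwards [ae_restrict_mem hS] with y hy
  have hkernel : 0 ≤ Φ (l ^ s * (|u x - u y| / ‖x - y‖ ^ s)) / ‖x - y‖ ^ p :=
    div_nonneg (hΦ.nonneg (by positivity)) (by positivity)
  rw [← ENNReal.ofReal_mul' hkernel]
  exact ENNReal.ofReal_le_ofReal (hΦ.map_abs_sub_le_mul_kernel hp hs hl hK0 hK u (hdiam x hx y hy))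

end Kernel

end IsOrlicz

theorem fractional_orlicz_poincare_wirtinger_general
    (N : ℕ) (Ω : Set (EuclideanSpace ℝ (Fin N)))
    (hΩo : IsOpen Ω) (hΩb : Bornology.IsBounded Ω)
    (s : ℝ) (hs : s ∈ Ioo (0:ℝ) 1) (Φ : ℝ → ℝ) (hΦ : IsOrlicz Φ) :
    ∃ C > 0, ∀ l : ℝ, 0 < l →
      ∀ u : EuclideanSpace ℝ (Fin N) → ℝ, Measurable u →
        IntegrableOn u (l • Ω) →
        (∫⁻ x in l • Ω, ENNReal.ofReal (Φ |u x - ⨍ y in l • Ω, u y|)) ≤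
          ENNReal.ofReal C *
            ∫⁻ x in l • Ω, ∫⁻ y in l • Ω,
              ENNReal.ofReal
                (Φ (l ^ s * (|u x - u y| / ‖x - y‖ ^ s)) / ‖x - y‖ ^ (N:ℝ)) := by
  obtain rfl | hne := Ω.eq_empty_or_nonempty
  · exact ⟨1, one_pos, fun l _ u _ _ => by simp⟩
  have hvolΩ : 0 < volume.real Ω :=
    ENNReal.toReal_pos (hΩo.measure_pos volume hne).ne' hΩb.measure_lt_top.ne
  set D := Metric.diam Ω + 1
  have hD : 0 < D := by positivity
  obtain ⟨K, hK0, hK⟩ := hΦ.exists_map_mul_le (Real.rpow_nonneg hD.le s)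
  refine ⟨K * D ^ (N : ℝ) / volume.real Ω, by positivity, fun l hl u _ hu => ?_⟩
  have hdiam : ∀ x ∈ l • Ω, ∀ y ∈ l • Ω, ‖x - y‖ ≤ l * D := by
    rintro _ ⟨x, hx, rfl⟩ _ ⟨y, hy, rfl⟩
    rw [← smul_sub, norm_smul, Real.norm_of_nonneg hl.le, ← dist_eq_norm]
    gcongr
    exact (Metric.dist_le_diam_of_mem hΩb hx hy).trans (by linarith)
  have hvol : volume (l • Ω) = ENNReal.ofReal (l ^ N * volume.real Ω) := by
    rw [Measure.addHaar_smul, finrank_euclideanSpace_fin, abs_of_nonneg (by positivity),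
      ENNReal.ofReal_mul (by positivity), ofReal_measureReal hΩb.measure_lt_top.ne]
  have : Fact (volume (l • Ω) < ⊤) := ⟨hvol ▸ ENNReal.ofReal_lt_top⟩
  calc (∫⁻ x in l • Ω, ENNReal.ofReal (Φ |u x - ⨍ y in l • Ω, u y|))
      ≤ (volume (l • Ω))⁻¹ * ∫⁻ x in l • Ω, ∫⁻ y in l • Ω, ENNReal.ofReal (Φ |u x - u y|) := by
        simpa using hΦ.lintegral_map_abs_sub_average_le hu
    _ ≤ (volume (l • Ω))⁻¹ * (ENNReal.ofReal (K * (l * D) ^ (N : ℝ)) * ∫⁻ x in l • Ω,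
          ∫⁻ y in l • Ω, ENNReal.ofReal
            (Φ (l ^ s * (|u x - u y| / ‖x - y‖ ^ s)) / ‖x - y‖ ^ (N : ℝ))) := by
        gcongr
        exact hΦ.lintegral_lintegral_map_abs_sub_le volume (Nat.cast_nonneg N) hs.1.le hl hK0.le hK
          u ((hΩo.smul₀ hl.ne').measurableSet) hdiam
    _ = _ := by
        rw [← mul_assoc, hvol, ← ENNReal.ofReal_inv_of_pos (by positivity),
          ← ENNReal.ofReal_mul (by positivity), Real.mul_rpow hl.le hD.le, Real.rpow_natCast]
        congr 2
        field_simp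

/-- Fractional Orlicz–Poincaré–Wirtinger inequality on dilates `Ω_λ = λ·Ω`,
with a constant independent of the dilation parameter. -/
theorem fractional_orlicz_poincare_wirtinger
    (N : ℕ) (hN : 1 ≤ N) (Ω : Set (EuclideanSpace ℝ (Fin N)))
    (hΩo : IsOpen Ω) (hΩb : Bornology.IsBounded Ω)
    (s : ℝ) (hs : s ∈ Ioo (0:ℝ) 1) (Φ : ℝ → ℝ) (hΦ : IsOrlicz Φ) :
    ∃ C > 0, ∀ l : ℝ, 0 < l →
      ∀ u : EuclideanSpace ℝ (Fin N) → ℝ, Measurable u →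
        IntegrableOn u (l • Ω) →
        (∫⁻ x in l • Ω, ENNReal.ofReal (Φ |u x - ⨍ y in l • Ω, u y|)) ≤
          ENNReal.ofReal C *
            ∫⁻ x in l • Ω, ∫⁻ y in l • Ω,
              ENNReal.ofReal
                (Φ (l ^ s * (|u x - u y| / ‖x - y‖ ^ s)) / ‖x - y‖ ^ (N:ℝ)) :=
  fractional_orlicz_poincare_wirtinger_general N Ω hΩo hΩb s hs Φ hΦ
end
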